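/- arXiv:1506.07810 — 3 statements merged into one kernel-verified Lean document; each statement's English description precedes it below -/
import Mathlib

section
/- If A is c-inseparable in the induced subgraph G[A] (i.e., G[A] is a c-atom), then any two vertices of A are c-inseparable in the ambient graph G. Conversely, if A is a maximal c-inseparable set in G, then G[A] is a maximal c-atom of G, and vice versa: G[A] is a maximal c-atom of G if and only if A is maximal c-inseparable in G. -/
variable {V : Type*}

/-- `C` separates `x` and `y` in `G`: neither endpoint is in `C` and every walk
from `x` to `y` meets `C`. -/
def Separates (G : SimpleGraph V) (C : Set V) (x y : V) : Prop :=
  x ∉ C ∧ y ∉ C ∧ ∀ p : G.Walk x y, ∃ z ∈ C, z ∈ p.support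

/-- `x` and `y` are `c`-inseparable in `G`: no clique of size at most `c` separates them. -/
def CInsep (G : SimpleGraph V) (c : ℕ) (x y : V) : Prop :=
  ∀ C : Set V, G.IsClique C → C.ncard ≤ c → ¬ Separates G C x y

/-- A set is `c`-inseparable if all its pairs of vertices are. -/
def InsepSet (G : SimpleGraph V) (c : ℕ) (A : Set V) : Prop :=
  ∀ x ∈ A, ∀ y ∈ A, CInsep G c x y

/-- Maximal `c`-inseparable set. -/
def MaxInsepSet (G : SimpleGraph V) (c : ℕ) (A : Set V) : Prop :=
  InsepSet G c A ∧ ∀ B, A ⊆ B → InsepSet G c B → B = A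

/-- `C` separates `x` and `y` within the induced subgraph `G[A]`. -/
def SeparatesWithin (G : SimpleGraph V) (A C : Set V) (x y : V) : Prop :=
  x ∈ A \ C ∧ y ∈ A \ C ∧
    ∀ p : G.Walk x y, (∀ z ∈ p.support, z ∈ A) → ∃ z ∈ C, z ∈ p.support

/-- `G[A]` is a `c`-atom: it has no clique separator of size at most `c`. -/
def AtomWithin (G : SimpleGraph V) (c : ℕ) (A : Set V) : Prop :=
  ¬ ∃ C : Set V, C ⊆ A ∧ G.IsClique C ∧ C.ncard ≤ c ∧ ∃ x y, SeparatesWithin G A C x y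

/-- `G[A]` is a maximal `c`-atom of `G`. -/
def MaxAtom (G : SimpleGraph V) (c : ℕ) (A : Set V) : Prop :=
  AtomWithin G c A ∧ ∀ B, A ⊆ B → AtomWithin G c B → B = A

/-!
A maximal `c`-inseparable set `A` is closed under rerouting: every walk between two vertices
of `A` can be shortened to one inside `A` that uses only vertices of the original walk. Indeed, if
the walk leaves `A` at `v`, maximality gives a clique `T` of size at most `c` separating `v` from
some `a ∈ A`; both halves of the walk (before and after `v`) must meet `T`, since their endpoints
are inseparable from `a`, and as `T` is a clique the walk can jump from the first half to the
second inside `T`, which shortens it. So a small clique separator of `G[A]` would also separate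
two vertices of `A` in `G`. The other implications are bookkeeping, using that every inseparable set extends
to a maximal one in a finite graph.
-/

open SimpleGraph

namespace SimpleGraph.Walk

variable {G : SimpleGraph V} [DecidableEq V]

lemma exists_shorter_of_eq_or_adj {x v y t₁ t₂ : V} (p₁ : G.Walk x v) (p₂ : G.Walk v y)
    (h₁ : t₁ ∈ p₁.support) (h₂ : t₂ ∈ p₂.support) (hv₁ : t₁ ≠ v) (hv₂ : t₂ ≠ v)
    (hadj : t₁ = t₂ ∨ G.Adj t₁ t₂) :
    ∃ q : G.Walk x y, q.length < (p₁.append p₂).length ∧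
      q.support ⊆ (p₁.append p₂).support := by
  have hlt₁ := length_takeUntil_lt_length h₁ hv₁
  have hlt₂ := length_dropUntil_lt_length h₂ hv₂
  have hsub : ∀ z, z ∈ (p₁.takeUntil t₁ h₁).support ∨ z ∈ (p₂.dropUntil t₂ h₂).support →
      z ∈ (p₁.append p₂).support := by
    rintro z (hz | hz) <;> rw [mem_support_append_iff]
    · exact .inl (p₁.support_takeUntil_subset_support h₁ hz)
    · exact .inr (p₂.support_dropUntil_subset_support h₂ hz)
  rcases hadj with rfl | hadj
  · refine ⟨(p₁.takeUntil t₁ h₁).append (p₂.dropUntil t₁ h₂), ?_,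
      fun z hz => hsub z ((mem_support_append_iff _ _).1 hz)⟩
    simp only [length_append]
    omega
  · refine ⟨(p₁.takeUntil t₁ h₁).append (cons hadj (p₂.dropUntil t₂ h₂)), ?_,
      fun z hz => hsub z ?_⟩
    · simp only [length_append, length_cons]
      omega
    · rw [mem_support_append_iff, support_cons, List.mem_cons] at hz
      rcases hz with hz | rfl | hz
      exacts [.inl hz, .inl (end_mem_support _), .inr hz]

end SimpleGraph.Walk

section

variable {G : SimpleGraph V} {c : ℕ}

lemma Separates.symm {C : Set V} {x y : V} (h : Separates G C x y) : Separates G C y x := by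
  obtain ⟨hx, hy, hw⟩ := h
  refine ⟨hy, hx, fun p => ?_⟩
  obtain ⟨z, hzC, hz⟩ := hw p.reverse
  exact ⟨z, hzC, by simpa using hz⟩

lemma not_separates_self (C : Set V) (x : V) : ¬ Separates G C x x := by
  rintro ⟨hx, -, hw⟩
  obtain ⟨z, hzC, hz⟩ := hw .nil
  rw [Walk.mem_support_nil_iff] at hz
  exact hx (hz ▸ hzC)

lemma CInsep.symm {x y : V} (h : CInsep G c x y) : CInsep G c y x :=
  fun C hC hCc hsep => h C hC hCc hsep.symm

lemma cInsep_self (x : V) : CInsep G c x x :=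
  fun C _ _ => not_separates_self C x

lemma CInsep.exists_walk_avoiding {x y : V} (h : CInsep G c x y) {T : Set V}
    (hT : G.IsClique T) (hTc : T.ncard ≤ c) (hx : x ∉ T) (hy : y ∉ T) :
    ∃ p : G.Walk x y, ∀ z ∈ p.support, z ∉ T := by
  by_contra! hp
  exact h T hT hTc ⟨hx, hy, fun p => (hp p).imp fun _ h => ⟨h.2, h.1⟩⟩

lemma Separates.exists_mem_support_of_cInsep {T : Set V} {a v x : V}
    (hsep : Separates G T a v) (hT : G.IsClique T) (hTc : T.ncard ≤ c)
    (hxa : CInsep G c x a) (q : G.Walk x v) : ∃ t ∈ T, t ∈ q.support := by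
  by_contra! hq
  obtain ⟨w, hw⟩ :=
    hxa.exists_walk_avoiding hT hTc (fun hx => hq x hx q.start_mem_support) hsep.1
  obtain ⟨z, hzT, hz⟩ := hsep.2.2 (w.reverse.append q)
  rw [Walk.mem_support_append_iff, Walk.support_reverse, List.mem_reverse] at hz
  exact hz.elim (hw z · hzT) (hq z hzT)

lemma MaxInsepSet.exists_separates {A : Set V} (hA : MaxInsepSet G c A) {v : V} (hv : v ∉ A) :
    ∃ a ∈ A, ∃ T : Set V, G.IsClique T ∧ T.ncard ≤ c ∧ Separates G T a v := by
  by_contra! h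
  have hins : InsepSet G c (insert v A) := by
    rintro x (rfl | hx) y (rfl | hy)
    · exact cInsep_self _
    · exact CInsep.symm (h y hy)
    · exact h x hx
    · exact hA.1 x hx y hy
  exact hv (hA.2 _ (Set.subset_insert v A) hins ▸ Set.mem_insert v A)

lemma MaxInsepSet.exists_walk_within {A : Set V} (hA : MaxInsepSet G c A) {x y : V}
    (hx : x ∈ A) (hy : y ∈ A) (p : G.Walk x y) :
    ∃ q : G.Walk x y, (∀ z ∈ q.support, z ∈ A) ∧ q.support ⊆ p.support := by
  classical
  induction hn : p.length using Nat.strong_induction_on generalizing p with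
  | _ n ih =>
  by_cases hpA : ∀ z ∈ p.support, z ∈ A
  · exact ⟨p, hpA, List.Subset.refl _⟩
  push Not at hpA
  obtain ⟨v, hvp, hvA⟩ := hpA
  obtain ⟨a, ha, T, hT, hTc, hsep⟩ := hA.exists_separates hvA
  obtain ⟨t₁, ht₁T, ht₁⟩ :=
    hsep.exists_mem_support_of_cInsep hT hTc (hA.1 x hx a ha) (p.takeUntil v hvp)
  obtain ⟨t₂, ht₂T, ht₂⟩ :=
    hsep.exists_mem_support_of_cInsep hT hTc (hA.1 y hy a ha) (p.dropUntil v hvp).reverse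
  rw [Walk.support_reverse, List.mem_reverse] at ht₂
  have hne : ∀ t ∈ T, t ≠ v := fun t ht h => hsep.2.1 (h ▸ ht)
  obtain ⟨r, hr, hrp⟩ := Walk.exists_shorter_of_eq_or_adj _ _ ht₁ ht₂ (hne t₁ ht₁T)
    (hne t₂ ht₂T) ((eq_or_ne t₁ t₂).imp_right (hT ht₁T ht₂T))
  rw [p.take_spec hvp] at hr hrp
  obtain ⟨q, hqA, hqr⟩ := ih r.length (hn ▸ hr) r rfl
  exact ⟨q, hqA, fun z hz => hrp (hqr hz)⟩

lemma MaxInsepSet.atomWithin {A : Set V} (hA : MaxInsepSet G c A) : AtomWithin G c A := by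
  rintro ⟨S, -, hS, hSc, x, y, ⟨hx, hxS⟩, ⟨hy, hyS⟩, hsep⟩
  obtain ⟨p, hp⟩ := (hA.1 x hx y hy).exists_walk_avoiding hS hSc hxS hyS
  obtain ⟨q, hqA, hqp⟩ := hA.exists_walk_within hx hy p
  obtain ⟨z, hzS, hz⟩ := hsep q hqA
  exact hp z (hqp hz) hzS

variable [Finite V]

lemma AtomWithin.insepSet {A : Set V} (h : AtomWithin G c A) : InsepSet G c A := by
  rintro x hx y hy C hC hCc ⟨hxC, hyC, hw⟩
  refine h ⟨C ∩ A, Set.inter_subset_right, hC.subset Set.inter_subset_left,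
    (Set.ncard_le_ncard Set.inter_subset_left C.toFinite).trans hCc, x, y,
    ⟨hx, fun h => hxC h.1⟩, ⟨hy, fun h => hyC h.1⟩, fun p hp => ?_⟩
  obtain ⟨z, hzC, hz⟩ := hw p
  exact ⟨z, ⟨hzC, hp z hz⟩, hz⟩

lemma InsepSet.exists_maxInsepSet {A : Set V} (h : InsepSet G c A) :
    ∃ B, A ⊆ B ∧ MaxInsepSet G c B := by
  obtain ⟨B, ⟨hAB, hB⟩, hmax⟩ := Set.Finite.exists_maximalFor id
    {B | A ⊆ B ∧ InsepSet G c B} (Set.toFinite _) ⟨A, subset_rfl, h⟩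
  exact ⟨B, hAB, hB, fun B' hBB' hB' => (hmax ⟨hAB.trans hBB', hB'⟩ hBB').antisymm hBB'⟩

end

/-- If `G[A]` is a `c`-atom then all pairs of vertices of `A` are `c`-inseparable in
the ambient graph `G`; moreover `G[A]` is a maximal `c`-atom of `G` if and only if
`A` is a maximal `c`-inseparable set in `G`. -/
theorem stmt1 [Fintype V] (G : SimpleGraph V) (c : ℕ) :
    (∀ A : Set V, AtomWithin G c A → InsepSet G c A) ∧
    (∀ A : Set V, MaxAtom G c A ↔ MaxInsepSet G c A) := by
  refine ⟨fun A => AtomWithin.insepSet, fun A => ⟨?_, fun hA =>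
    ⟨hA.atomWithin, fun B hAB hB => hA.2 B hAB hB.insepSet⟩⟩⟩
  rintro ⟨hatom, hmax⟩
  refine ⟨hatom.insepSet, fun B hAB hB => ?_⟩
  obtain ⟨B', hBB', hB'⟩ := hB.exists_maxInsepSet
  have hB'A : B' = A := hmax B' (hAB.trans hBB') hB'.atomWithin
  exact (hB'A ▸ hBB').antisymm hAB
end

section
/- Let G be a graph and I ⊆ V(G) a c-inseparable set with |I| ≥ c + 1. Then the set A := { a ∈ V(G) : I ∪ {a} is c-inseparable } is c-inseparable, and A is the unique maximal c-inseparable set in G containing I. -/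
variable {V : Type*}

/-!
Any two vertices `x, y` with `I ∪ {x}` and `I ∪ {y}` inseparable are inseparable: a clique `C`
with `|C| ≤ c < |I|` misses some `v ∈ I`, and walks `x ⇝ v ⇝ y` avoiding `C` concatenate.
Every inseparable `B ⊇ I` lies inside `A`, so `A` is the unique maximal one.
-/

variable {G : SimpleGraph V} {c : ℕ}

lemma Separates.left_or_right {C : Set V} {x y v : V} (h : Separates G C x y) (hv : v ∉ C) :
    Separates G C x v ∨ Separates G C v y := by
  obtain ⟨hx, hy, hp⟩ := h
  by_contra! hsep
  obtain ⟨p, hpC⟩ : ∃ p : G.Walk x v, ∀ z ∈ C, z ∉ p.support := by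
    simpa [Separates, hx, hv] using hsep.1
  obtain ⟨q, hqC⟩ : ∃ q : G.Walk v y, ∀ z ∈ C, z ∉ q.support := by
    simpa [Separates, hy, hv] using hsep.2
  obtain ⟨z, hzC, hz⟩ := hp (p.append q)
  rcases (SimpleGraph.Walk.mem_support_append_iff p q).mp hz with hz | hz
  exacts [hpC z hzC hz, hqC z hzC hz]

lemma InsepSet.mono {A B : Set V} (hB : InsepSet G c B) (hAB : A ⊆ B) : InsepSet G c A :=
  fun x hx y hy => hB x (hAB hx) y (hAB hy)

lemma InsepSet.union_singleton {I : Set V} {a : V} (hI : InsepSet G c I) (ha : a ∈ I) :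
    InsepSet G c (I ∪ {a}) := by
  rwa [Set.union_eq_self_of_subset_right (Set.singleton_subset_iff.mpr ha)]

lemma InsepSet.subset_setOf_union_singleton {I B : Set V} (hB : InsepSet G c B) (hIB : I ⊆ B) :
    B ⊆ {a | InsepSet G c (I ∪ {a})} :=
  fun _ hb => hB.mono (Set.union_subset hIB (Set.singleton_subset_iff.mpr hb))

lemma insepSet_setOf_union_singleton [Finite V] {I : Set V} (hcard : c + 1 ≤ I.ncard) :
    InsepSet G c {a | InsepSet G c (I ∪ {a})} := by
  intro x hx y hy C hC hCcard hsep
  obtain ⟨v, hvI, hvC⟩ := Set.exists_mem_notMem_of_ncard_lt_ncard (s := C) (t := I) (by omega)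
  rcases hsep.left_or_right hvC with h | h
  · exact hx x (.inr rfl) v (.inl hvI) C hC hCcard h
  · exact hy v (.inl hvI) y (.inr rfl) C hC hCcard h

/-- If `I` is `c`-inseparable with `|I| ≥ c + 1`, then
`A = {a | I ∪ {a} is c-inseparable}` is the unique maximal `c`-inseparable set
containing `I`. -/
theorem stmt2 [Fintype V] (G : SimpleGraph V) (c : ℕ) (I : Set V)
    (hI : InsepSet G c I) (hcard : c + 1 ≤ I.ncard) :
    InsepSet G c {a : V | InsepSet G c (I ∪ {a})} ∧
    I ⊆ {a : V | InsepSet G c (I ∪ {a})} ∧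
    MaxInsepSet G c {a : V | InsepSet G c (I ∪ {a})} ∧
    ∀ B : Set V, MaxInsepSet G c B → I ⊆ B → B = {a : V | InsepSet G c (I ∪ {a})} := by
  have hA : InsepSet G c {a : V | InsepSet G c (I ∪ {a})} :=
    insepSet_setOf_union_singleton hcard
  have hIA : I ⊆ {a : V | InsepSet G c (I ∪ {a})} := fun _ ha => hI.union_singleton ha
  refine ⟨hA, hIA, ⟨hA, fun B hAB hB => ?_⟩, fun B hB hIB => ?_⟩
  · exact (hB.subset_setOf_union_singleton (hIA.trans hAB)).antisymm hAB
  · exact (hB.2 _ (hB.1.subset_setOf_union_singleton hIB) hA).symm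
end

section
/- The improvement operation is idempotent: impr(impr(G)) = impr(G) for every graph G. -/
variable {V : Type*}

/-- `(T, bags)` is a tree decomposition of `G`. -/
def IsTreeDecomp {ι : Type*} (G : SimpleGraph V) (T : SimpleGraph ι) (bags : ι → Set V) : Prop :=
  T.IsTree ∧
  (∀ v : V, (T.induce {n : ι | v ∈ bags n}).Connected) ∧
  (∀ u v : V, G.Adj u v → ∃ n : ι, u ∈ bags n ∧ v ∈ bags n)

/-- `G` has tree width at most `k`. -/
def TwLE (G : SimpleGraph V) (k : ℕ) : Prop :=
  ∃ (ι : Type) (T : SimpleGraph ι) (bags : ι → Set V),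
    IsTreeDecomp G T bags ∧ ∀ n : ι, (bags n).ncard ≤ k + 1

/-- The tree width of `G`. -/
noncomputable def tw (G : SimpleGraph V) : ℕ := sInf {k : ℕ | TwLE G k}

/-- The improved graph `impr G`: an edge is added between every pair of distinct
vertices `u`, `v` with `κ_G(u,v) > tw G`, i.e. such that no vertex set of size at
most `tw G` separates `u` from `v`. -/
noncomputable def impr (G : SimpleGraph V) : SimpleGraph V where
  Adj u v := u ≠ v ∧
    (G.Adj u v ∨ ∀ S : Set V, S.ncard ≤ tw G → ¬ Separates G S u v)
  symm := by
    constructor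
    rintro u v ⟨h1, h2⟩
    refine ⟨h1.symm, ?_⟩
    rcases h2 with h | h
    · exact Or.inl h.symm
    · refine Or.inr fun S hS hsep => h S hS ?_
      obtain ⟨hv, hu, hp⟩ := hsep
      refine ⟨hu, hv, fun p => ?_⟩
      obtain ⟨z, hz, hzs⟩ := hp p.reverse
      exact ⟨z, hz, by simpa [SimpleGraph.Walk.support_reverse] using hzs⟩
  loopless := by constructor; rintro u ⟨h, -⟩; exact h rfl

/-
Every edge of `G` is an edge of `impr G`, so `tw G ≤ tw (impr G)`. Conversely, an added edge
`uv` of `impr G` cannot be cut by a set `S` of at most `tw G` vertices, so every walk of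
`impr G` avoiding `S` can be rerouted through `G`, edge by edge, still avoiding `S`. Hence a
separator of size at most `tw G` in `G` is a separator of size at most `tw (impr G)` in
`impr G`, and `impr` adds no new edges the second time.
-/

lemma le_impr (G : SimpleGraph V) : G ≤ impr G :=
  fun _ _ h => ⟨h.ne, Or.inl h⟩

lemma IsTreeDecomp.anti {ι : Type*} {G H : SimpleGraph V} {T : SimpleGraph ι}
    {bags : ι → Set V} (hGH : G ≤ H) (h : IsTreeDecomp H T bags) : IsTreeDecomp G T bags :=
  ⟨h.1, h.2.1, fun u v huv => h.2.2 u v (hGH huv)⟩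

lemma TwLE.anti {G H : SimpleGraph V} {k : ℕ} (hGH : G ≤ H) (h : TwLE H k) : TwLE G k :=
  let ⟨ι, T, bags, hdec, hcard⟩ := h
  ⟨ι, T, bags, hdec.anti hGH, hcard⟩

-- The single bag `univ` works even for infinite `V`, where `ncard univ = Nat.card V = 0`.
lemma twLE_natCard (G : SimpleGraph V) : TwLE G (Nat.card V) := by
  refine ⟨Unit, ⊥, fun _ => Set.univ, ⟨?_, fun v => ?_, fun u v _ => ⟨(), trivial, trivial⟩⟩,
    fun _ => by simp [Set.ncard_univ]⟩
  · exact SimpleGraph.isTree_iff_existsUnique_path.2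
      ⟨⟨()⟩, fun _ _ => ⟨.nil, by simp, fun q _ => by
        cases q with
        | nil => rfl
        | cons h => exact h.elim⟩⟩
  · have : Nonempty {n : Unit | v ∈ Set.univ} := ⟨⟨(), trivial⟩⟩
    exact ⟨fun a b => Subsingleton.elim a b ▸ SimpleGraph.Reachable.refl a⟩

lemma twLE_tw (G : SimpleGraph V) : TwLE G (tw G) :=
  Nat.sInf_mem (s := {k | TwLE G k}) ⟨_, twLE_natCard G⟩

lemma tw_mono {G H : SimpleGraph V} (hGH : G ≤ H) : tw G ≤ tw H :=
  Nat.sInf_le ((twLE_tw H).anti hGH)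

lemma exists_walk_avoiding_of_impr_adj {G : SimpleGraph V} {S : Set V} (hS : S.ncard ≤ tw G)
    {a c : V} (h : (impr G).Adj a c) (ha : a ∉ S) (hc : c ∉ S) :
    ∃ q : G.Walk a c, ∀ z ∈ S, z ∉ q.support := by
  rcases h.2 with hadj | hnsep
  · refine ⟨hadj.toWalk, fun z hz => ?_⟩
    simp [ne_of_mem_of_not_mem hz ha, ne_of_mem_of_not_mem hz hc]
  · by_contra! hcut
    exact hnsep S hS ⟨ha, hc, hcut⟩

lemma exists_walk_avoiding_of_impr_walk {G : SimpleGraph V} {S : Set V} (hS : S.ncard ≤ tw G) :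
    ∀ {a b : V} (p : (impr G).Walk a b), (∀ z ∈ S, z ∉ p.support) →
      ∃ q : G.Walk a b, ∀ z ∈ S, z ∉ q.support
  | _, _, .nil, hp => ⟨.nil, hp⟩
  | a, _, .cons (v := c) h p, hp => by
    simp only [SimpleGraph.Walk.support_cons, List.mem_cons, not_or] at hp
    obtain ⟨q, hq⟩ := exists_walk_avoiding_of_impr_adj hS h (fun hz => (hp a hz).1 rfl)
      (fun hz => (hp c hz).2 p.start_mem_support)
    obtain ⟨q', hq'⟩ := exists_walk_avoiding_of_impr_walk hS p fun z hz => (hp z hz).2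
    exact ⟨q.append q', fun z hz hmem => (SimpleGraph.Walk.mem_support_append_iff q q').1 hmem
      |>.elim (hq z hz) (hq' z hz)⟩

lemma Separates.impr {G : SimpleGraph V} {S : Set V} {x y : V} (hS : S.ncard ≤ tw G)
    (h : Separates G S x y) : Separates (impr G) S x y := by
  refine ⟨h.1, h.2.1, fun p => ?_⟩
  by_contra! hp
  obtain ⟨q, hq⟩ := exists_walk_avoiding_of_impr_walk hS p hp
  obtain ⟨z, hzS, hzq⟩ := h.2.2 q
  exact hq z hzS hzq

theorem stmt10_general (G : SimpleGraph V) :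
    impr (impr G) = impr G := by
  refine le_antisymm (fun u v ⟨hne, h⟩ => ?_) (le_impr _)
  rcases h with h | h
  · exact h
  · exact ⟨hne, Or.inr fun S hS hsep => h S (hS.trans (tw_mono (le_impr G))) (hsep.impr hS)⟩

/-- The improvement operation is idempotent. -/
theorem stmt10 [Fintype V] (G : SimpleGraph V) :
    impr (impr G) = impr G :=
  stmt10_general G
end
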